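/- Let G be a P₆-free graph (no efficient dominating set needed) and let a, b, c, d, e be five vertices that are consecutive on an odd antihole of G² (i.e., consecutive pairs among a,b,c,d,e are nonadjacent in G², and all other pairs among them are adjacent in G²). If ac ∈ E(G), then be ∉ E(G). -/

import Mathlib

open SimpleGraph Finset

variable {V : Type*}

/-- The square of a graph `G`: two distinct vertices are adjacent iff
their distance in `G` is 1 or 2. -/
def square (G : SimpleGraph V) : SimpleGraph V where
  Adj u v := u ≠ v ∧ (G.Adj u v ∨ ∃ w, G.Adj u w ∧ G.Adj w v)
  symm := ⟨by
    rintro u v ⟨h, h2 | ⟨w, hw1, hw2⟩⟩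
    · exact ⟨h.symm, Or.inl h2.symm⟩
    · exact ⟨h.symm, Or.inr ⟨w, hw2.symm, hw1.symm⟩⟩⟩
  loopless := ⟨by rintro u ⟨h, _⟩; exact h rfl⟩

/-- `D` is an efficient dominating set of `G`: every vertex is dominated
(by closed neighborhoods) by exactly one vertex of `D`. -/
def IsEDS (G : SimpleGraph V) (D : Set V) : Prop :=
  ∀ v : V, ∃! d : V, d ∈ D ∧ (d = v ∨ G.Adj d v)

/-- `G` has no induced subgraph isomorphic to `H`. -/
def Free {W : Type*} (G : SimpleGraph V) (H : SimpleGraph W) : Prop :=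
  IsEmpty (H ↪g G)

/-- The house: the complement of the path on five vertices. -/
def house : SimpleGraph (Fin 5) := (pathGraph 5)ᶜ

/-- The domino: a `P₅` `x₁ … x₅` together with a vertex adjacent to `x₁, x₃, x₅`. -/
def domino : SimpleGraph (Fin 6) :=
  SimpleGraph.fromRel (fun i j =>
    (i, j) ∈ [((0 : Fin 6), (1 : Fin 6)), (1, 2), (2, 3), (3, 4), (5, 0), (5, 2), (5, 4)])

/-- A graph is hole-free if it contains no induced cycle `C_k`, `k ≥ 5`. -/
def HoleFree (G : SimpleGraph V) : Prop := ∀ k, 5 ≤ k → _root_.Free G (cycleGraph k)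

/-- A graph is chordal if it contains no induced cycle `C_k`, `k ≥ 4`. -/
def Chordal (G : SimpleGraph V) : Prop := ∀ k, 4 ≤ k → _root_.Free G (cycleGraph k)

/-! If `be ∈ E(G)`, neither `bd` nor `ad` is an edge of `G` (`d–b–e` and `c–a–d` would join
vertices at distance at least 3 by a path of length 2), so `b` and `a` reach `d` through common
neighbours `w` and `y`. The same argument rules out every other edge among `a, b, c, d, e, w, y`,
so `e b w y a c` is an induced `P₆` if `wy ∈ E(G)`, and `e b w d y a` is one otherwise. -/

namespace SimpleGraph

variable {W : Type*} {G : SimpleGraph V} {H : SimpleGraph W}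

lemma injective_of_adj_iff (hH : Function.Injective H.neighborSet) {f : W → V}
    (hf : ∀ i j, G.Adj (f i) (f j) ↔ H.Adj i j) : Function.Injective f := by
  intro i j hij
  apply hH
  ext k
  simp only [mem_neighborSet, ← hf, hij]

lemma pathGraph_six_neighborSet_injective : Function.Injective (pathGraph 6).neighborSet := by
  intro i j hij
  have h : ∀ k, (pathGraph 6).Adj i k ↔ (pathGraph 6).Adj j k := fun k => Set.ext_iff.mp hij k
  simp only [pathGraph_adj] at h
  clear hij
  revert i j h
  decide

lemma not_free_pathGraph_six {v₀ v₁ v₂ v₃ v₄ v₅ : V}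
    (h₀₁ : G.Adj v₀ v₁) (h₁₂ : G.Adj v₁ v₂) (h₂₃ : G.Adj v₂ v₃) (h₃₄ : G.Adj v₃ v₄)
    (h₄₅ : G.Adj v₄ v₅)
    (n₀₂ : ¬G.Adj v₀ v₂) (n₀₃ : ¬G.Adj v₀ v₃) (n₀₄ : ¬G.Adj v₀ v₄) (n₀₅ : ¬G.Adj v₀ v₅)
    (n₁₃ : ¬G.Adj v₁ v₃) (n₁₄ : ¬G.Adj v₁ v₄) (n₁₅ : ¬G.Adj v₁ v₅)
    (n₂₄ : ¬G.Adj v₂ v₄) (n₂₅ : ¬G.Adj v₂ v₅) (n₃₅ : ¬G.Adj v₃ v₅) :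
    ¬_root_.Free G (pathGraph 6) := by
  let f : Fin 6 → V := ![v₀, v₁, v₂, v₃, v₄, v₅]
  have hf : ∀ i j, G.Adj (f i) (f j) ↔ (pathGraph 6).Adj i j := by
    intro i j
    fin_cases i <;> fin_cases j <;> simp [f, pathGraph_adj, G.adj_comm, *]
  exact fun hfree =>
    hfree.false ⟨⟨f, injective_of_adj_iff pathGraph_six_neighborSet_injective hf⟩, hf _ _⟩

end SimpleGraph

section Square

variable {G : SimpleGraph V} {u v w : V}

lemma SimpleGraph.Adj.square (h : G.Adj u v) : (square G).Adj u v := ⟨h.ne, .inl h⟩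

lemma square_adj_of_adj_of_adj (huv : u ≠ v) (h₁ : G.Adj u w) (h₂ : G.Adj w v) :
    (square G).Adj u v :=
  ⟨huv, .inr ⟨w, h₁, h₂⟩⟩

lemma exists_adj_adj_of_square_adj (h : (square G).Adj u v) (hn : ¬G.Adj u v) :
    ∃ w, G.Adj u w ∧ G.Adj w v :=
  h.2.resolve_left hn

end Square

theorem stmt16_general (G : SimpleGraph V) (h6 : _root_.Free G (pathGraph 6))
    (a b c d e : V)
    (hab : a ≠ b) (hbc : b ≠ c) (hcd : c ≠ d) (hde : d ≠ e)
    (nab : ¬ (square G).Adj a b) (nbc : ¬ (square G).Adj b c)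
    (ncd : ¬ (square G).Adj c d) (nde : ¬ (square G).Adj d e)
    (aad : (square G).Adj a d)
    (abd : (square G).Adj b d)
    (hac : G.Adj a c) :
    ¬ G.Adj b e := by
  intro hbe
  have hbd : ¬G.Adj b d := fun h => nde (square_adj_of_adj_of_adj hde h.symm hbe)
  have had : ¬G.Adj a d := fun h => ncd (square_adj_of_adj_of_adj hcd hac.symm h)
  obtain ⟨w, hbw, hwd⟩ := exists_adj_adj_of_square_adj abd hbd
  obtain ⟨y, hay, hyd⟩ := exists_adj_adj_of_square_adj aad had
  have hew : ¬G.Adj e w := fun h => nde (square_adj_of_adj_of_adj hde hwd.symm h.symm)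
  have hey : ¬G.Adj e y := fun h => nde (square_adj_of_adj_of_adj hde hyd.symm h.symm)
  have hea : ¬G.Adj e a := fun h => nab (square_adj_of_adj_of_adj hab h.symm hbe.symm)
  have hby : ¬G.Adj b y := fun h => nab (square_adj_of_adj_of_adj hab hay h.symm)
  have hba : ¬G.Adj b a := fun h => nab h.symm.square
  have hwa : ¬G.Adj w a := fun h => nab (square_adj_of_adj_of_adj hab h.symm hbw.symm)
  by_cases hwy : G.Adj w y
  · have hec : ¬G.Adj e c := fun h => nbc (square_adj_of_adj_of_adj hbc hbe h)
    have hbc' : ¬G.Adj b c := fun h => nbc h.square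
    have hwc : ¬G.Adj w c := fun h => ncd (square_adj_of_adj_of_adj hcd h.symm hwd)
    have hyc : ¬G.Adj y c := fun h => ncd (square_adj_of_adj_of_adj hcd h.symm hyd)
    exact not_free_pathGraph_six hbe.symm hbw hwy hay.symm hac
      hew hey hea hec hby hba hbc' hwa hwc hyc h6
  · have hed : ¬G.Adj e d := fun h => nde h.symm.square
    exact not_free_pathGraph_six hbe.symm hbw hwd hyd.symm hay.symm
      hew hed hey hea hbd hby hba hwy hwa (fun h => had h.symm) h6

theorem stmt16 (G : SimpleGraph V) (h6 : _root_.Free G (pathGraph 6))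
    (a b c d e : V)
    (hab : a ≠ b) (hbc : b ≠ c) (hcd : c ≠ d) (hde : d ≠ e)
    (nab : ¬ (square G).Adj a b) (nbc : ¬ (square G).Adj b c)
    (ncd : ¬ (square G).Adj c d) (nde : ¬ (square G).Adj d e)
    (aac : (square G).Adj a c) (aad : (square G).Adj a d) (aae : (square G).Adj a e)
    (abd : (square G).Adj b d) (abe : (square G).Adj b e) (ace : (square G).Adj c e)
    (hac : G.Adj a c) :
    ¬ G.Adj b e :=
  stmt16_general G h6 a b c d e hab hbc hcd hde nab nbc ncd nde aad abd hac
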